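/- arXiv:1605.02324 — 2 statements merged into one kernel-verified Lean document; each statement's English description precedes it below -/
import Mathlib

section
/- Let Ψ(σ²) = σ²/2 - (2σ/√(2π))·e^{-2/σ²} + Q(2/σ)·(4 - σ²) for σ > 0, where Q(x) = ∫_x^∞ (1/√(2π)) e^{-u²/2} du. Then for every N₀ > 0 and every 0 ≤ β < 2, the fixed-point equation σ² = N₀ + β·Ψ(σ²) has a unique positive solution. -/
/-!
Differentiating under the tail integral, `Ψ'(v) = 1/2 - Q(2/√v) - 2 φ(2/√v)/√v ≤ 1/2`, where `φ`
is the standard normal density: the two terms of `Ψ` in `φ(2/√v) / √v³` cancel. Hence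
`F(v) = v - βΨ(v)` has derivative at least `1 - β/2 > 0`: it is strictly increasing and grows at
least linearly on `(0, ∞)`. Since `Ψ(v) → 0` as `v → 0⁺`, also `F(v) → 0`, so `F` takes the value
`N₀` exactly once.
-/

open MeasureTheory Set Filter Topology ProbabilityTheory Real

section TailIntegral

variable {f : ℝ → ℝ}

theorem integral_Ioi_eq_sub_intervalIntegral (hf : Integrable f) (x : ℝ) :
    ∫ u in Ioi x, f u = (∫ u in Ioi 0, f u) - ∫ u in 0..x, f u := by
  rw [← intervalIntegral.integral_Ioi_sub_Ioi' hf.integrableOn hf.integrableOn]; ring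

theorem hasDerivAt_integral_Ioi (hf : Integrable f) (hc : Continuous f) (x : ℝ) :
    HasDerivAt (fun y ↦ ∫ u in Ioi y, f u) (-f x) x := by
  rw [funext (integral_Ioi_eq_sub_intervalIntegral hf)]
  exact (intervalIntegral.integral_hasDerivAt_right hf.intervalIntegrable
    hc.aestronglyMeasurable.stronglyMeasurableAtFilter hc.continuousAt).const_sub _

theorem tendsto_integral_Ioi_atTop (hf : Integrable f) :
    Tendsto (fun y ↦ ∫ u in Ioi y, f u) atTop (𝓝 0) := by
  rw [funext (integral_Ioi_eq_sub_intervalIntegral hf)]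
  simpa using (intervalIntegral_tendsto_integral_Ioi 0 hf.integrableOn tendsto_id).const_sub
    (∫ u in Ioi 0, f u)

end TailIntegral

theorem mul_sub_le_image_sub_of_le_hasDerivAt {F F' : ℝ → ℝ} {a C : ℝ}
    (hF : ∀ x, a < x → HasDerivAt F (F' x) x) (hF' : ∀ x, a < x → C ≤ F' x)
    {x y : ℝ} (hx : a < x) (hxy : x ≤ y) : C * (y - x) ≤ F y - F x := by
  refine (convex_Ioi a).mul_sub_le_image_sub_of_le_deriv
    (fun z hz ↦ (hF z hz).continuousAt.continuousWithinAt) ?_ ?_ x hx y (hx.trans_le hxy) hxy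
  · rw [interior_Ioi]
    exact fun z hz ↦ (hF z hz).differentiableAt.differentiableWithinAt
  · rw [interior_Ioi]
    exact fun z hz ↦ (hF z hz).deriv ▸ hF' z hz

theorem existsUnique_pos_eq_add_mul_of_hasDerivAt_le {Ψ Ψ' : ℝ → ℝ} {N0 β L : ℝ}
    (hN0 : 0 < N0) (hβ : 0 ≤ β) (hβL : β * L < 1)
    (hΨ : ∀ v, 0 < v → HasDerivAt Ψ (Ψ' v) v) (hΨ' : ∀ v, 0 < v → Ψ' v ≤ L)
    (hΨ0 : Tendsto Ψ (𝓝[>] 0) (𝓝 0)) :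
    ∃! v, 0 < v ∧ v = N0 + β * Ψ v := by
  set F : ℝ → ℝ := fun v ↦ v - β * Ψ v with hF_def
  have hF : ∀ v, 0 < v → HasDerivAt F (1 - β * Ψ' v) v := fun v hv ↦
    (hasDerivAt_id v).sub ((hΨ v hv).const_mul β)
  have hgrowth : ∀ x y, 0 < x → x ≤ y → (1 - β * L) * (y - x) ≤ F y - F x :=
    fun x y hx hxy ↦ mul_sub_le_image_sub_of_le_hasDerivAt hF
      (fun v hv ↦ by nlinarith [hΨ' v hv]) hx hxy
  have hmono : StrictMonoOn F (Ioi 0) := fun x hx y _ hxy ↦ by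
    nlinarith [hgrowth x y hx hxy.le]
  have hF0 : Tendsto F (𝓝[>] 0) (𝓝 0) := by
    simpa using (tendsto_id.mono_left nhdsWithin_le_nhds).sub (hΨ0.const_mul β)
  obtain ⟨a, haN0, ha⟩ :=
    ((hF0.eventually (gt_mem_nhds hN0)).and self_mem_nhdsWithin).exists
  set b := a + (N0 - F a) / (1 - β * L)
  have hab : a ≤ b := le_add_of_nonneg_right (div_nonneg (by linarith) (by linarith))
  have hNb : N0 ≤ F b := by
    have := hgrowth a b ha hab
    rw [add_sub_cancel_left, mul_div_cancel₀ _ (by linarith)] at this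
    linarith
  obtain ⟨c, hc, hFc⟩ := intermediate_value_Icc hab
    (fun v hv ↦ (hF v (ha.trans_le hv.1)).continuousAt.continuousWithinAt) ⟨haN0.le, hNb⟩
  have hc0 : 0 < c := ha.trans_le hc.1
  refine ⟨c, ⟨hc0, by simp only [hF_def] at hFc; linarith⟩, fun v ⟨hv0, hv⟩ ↦ ?_⟩
  exact hmono.injOn hv0 hc0 (by simp only [hF_def]; linarith)

theorem gaussianPDFReal_zero_one (u : ℝ) :
    gaussianPDFReal 0 1 u = 1 / √(2 * π) * exp (-u ^ 2 / 2) := by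
  simp [gaussianPDFReal]

theorem continuous_gaussianPDFReal (μ : ℝ) (v : NNReal) : Continuous (gaussianPDFReal μ v) := by
  unfold gaussianPDFReal; fun_prop

noncomputable def gaussianTail (x : ℝ) : ℝ := ∫ u in Ioi x, gaussianPDFReal 0 1 u

theorem gaussianTail_nonneg (x : ℝ) : 0 ≤ gaussianTail x :=
  setIntegral_nonneg measurableSet_Ioi fun u _ ↦ gaussianPDFReal_nonneg 0 1 u

theorem hasDerivAt_gaussianTail (x : ℝ) :
    HasDerivAt gaussianTail (-gaussianPDFReal 0 1 x) x :=
  hasDerivAt_integral_Ioi (integrable_gaussianPDFReal 0 1) (continuous_gaussianPDFReal 0 1) x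

theorem tendsto_gaussianTail_atTop : Tendsto gaussianTail atTop (𝓝 0) :=
  tendsto_integral_Ioi_atTop (integrable_gaussianPDFReal 0 1)

/-- The paper's `Ψ(σ²)`, written in `v = σ²`. -/
noncomputable def lamaMse (v : ℝ) : ℝ :=
  v / 2 - 2 * √v / √(2 * π) * exp (-2 / v) + gaussianTail (2 / √v) * (4 - v)

noncomputable def lamaMseDeriv (v : ℝ) : ℝ :=
  1 / 2 - gaussianTail (2 / √v) - 2 * gaussianPDFReal 0 1 (2 / √v) / √v

theorem lamaMseDeriv_le {v : ℝ} (hv : 0 < v) : lamaMseDeriv v ≤ 1 / 2 := by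
  have := gaussianTail_nonneg (2 / √v)
  have : 0 ≤ 2 * gaussianPDFReal 0 1 (2 / √v) / √v := by
    have := gaussianPDFReal_nonneg 0 1 (2 / √v); positivity
  unfold lamaMseDeriv; linarith

theorem hasDerivAt_lamaMse {v : ℝ} (hv : 0 < v) : HasDerivAt lamaMse (lamaMseDeriv v) v := by
  have hs : HasDerivAt (√·) (1 / (2 * √v)) v := hasDerivAt_sqrt hv.ne'
  have hexp := ((hasDerivAt_const v (-2 : ℝ)).div (hasDerivAt_id v) hv.ne').exp
  have hinv := (hasDerivAt_const v (2 : ℝ)).div hs (sqrt_pos.mpr hv).ne'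
  have h := (((hasDerivAt_id v).div_const 2).sub
    (((hs.const_mul 2).div_const √(2 * π)).mul hexp)).add
    (((hasDerivAt_gaussianTail _).comp v hinv).mul ((hasDerivAt_id v).const_sub 4))
  refine h.congr_deriv ?_
  obtain ⟨s, hs0, rfl⟩ : ∃ s, 0 < s ∧ s ^ 2 = v := ⟨√v, sqrt_pos.mpr hv, sq_sqrt hv.le⟩
  have hexp_arg : -(2 / s) ^ 2 / 2 = -2 / s ^ 2 := by ring
  simp only [lamaMseDeriv, gaussianPDFReal_zero_one, sqrt_sq hs0.le, Function.comp_apply, id,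
    Pi.div_apply, hexp_arg]
  field_simp
  ring

theorem tendsto_lamaMse_nhdsGT_zero : Tendsto lamaMse (𝓝[>] 0) (𝓝 0) := by
  have hsqrt : Tendsto (√·) (𝓝[>] 0) (𝓝[>] 0) :=
    tendsto_nhdsWithin_iff.mpr ⟨(continuous_sqrt.tendsto' 0 0 sqrt_zero).mono_left
      nhdsWithin_le_nhds, eventually_nhdsWithin_of_forall fun v hv ↦ sqrt_pos.mpr hv⟩
  have hexp : Tendsto (fun v ↦ exp (-2 / v)) (𝓝[>] 0) (𝓝 0) := by
    refine tendsto_exp_comp_nhds_zero.mpr ?_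
    exact (tendsto_const_nhds.neg_mul_atTop (by norm_num : (-2 : ℝ) < 0)
      tendsto_inv_nhdsGT_zero).congr fun v ↦ (div_eq_mul_inv _ _).symm
  have htail : Tendsto (fun v ↦ gaussianTail (2 / √v)) (𝓝[>] 0) (𝓝 0) := by
    refine tendsto_gaussianTail_atTop.comp ?_
    exact (tendsto_const_nhds.pos_mul_atTop two_pos
      (tendsto_inv_nhdsGT_zero.comp hsqrt)).congr fun v ↦ (div_eq_mul_inv _ _).symm
  have hid : Tendsto (fun v : ℝ ↦ v) (𝓝[>] 0) (𝓝 0) := tendsto_nhdsWithin_of_tendsto_nhds tendsto_id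
  have := ((hid.div_const 2).sub ((((hsqrt.mono_right nhdsWithin_le_nhds).const_mul 2).div_const
    √(2 * π)).mul hexp)).add (htail.mul (hid.const_sub 4))
  simp only [zero_div, mul_zero, sub_zero, zero_mul, add_zero] at this
  exact this

/-- For the BPSK state-evolution MSE function
Ψ(v) = v/2 - (2√v/√(2π))·e^{-2/v} + Q(2/√v)·(4-v) (v = σ² > 0),
the fixed-point equation σ² = N₀ + β·Ψ(σ²) has a unique positive solution
for every N₀ > 0 and 0 ≤ β < 2. -/
theorem stmt_9 (N0 β : ℝ) (hN0 : 0 < N0) (hβ0 : 0 ≤ β) (hβ2 : β < 2)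
    (Q : ℝ → ℝ)
    (hQ : ∀ x, Q x = ∫ u in Set.Ioi x, (1 / Real.sqrt (2 * Real.pi)) * Real.exp (-u ^ 2 / 2))
    (Ψ : ℝ → ℝ)
    (hΨ : ∀ v, 0 < v → Ψ v =
      v / 2 - 2 * Real.sqrt v / Real.sqrt (2 * Real.pi) * Real.exp (-2 / v)
        + Q (2 / Real.sqrt v) * (4 - v)) :
    ∃! v : ℝ, 0 < v ∧ v = N0 + β * Ψ v := by
  have hQ_eq : Q = gaussianTail := funext fun x ↦ by
    simp only [hQ, gaussianTail, gaussianPDFReal_zero_one]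
  have hΨ_eq : EqOn Ψ lamaMse (Ioi 0) := fun v hv ↦ by rw [hΨ v hv, hQ_eq, lamaMse]
  refine existsUnique_pos_eq_add_mul_of_hasDerivAt_le hN0 hβ0 (L := 1 / 2) (by linarith)
    (fun v hv ↦ (hasDerivAt_lamaMse hv).congr_of_eventuallyEq
      (hΨ_eq.eventuallyEq_of_mem (Ioi_mem_nhds hv))) (fun v hv ↦ lamaMseDeriv_le hv) ?_
  exact tendsto_lamaMse_nhdsGT_zero.congr' (eventuallyEq_nhdsWithin_of_eqOn hΨ_eq).symm
end

section
/- Let M ≥ 2 be even and S₀ uniform on {±1, ±3, ..., ±(M-1)}, α = M-1, and Ψ^PAM as before. For every N₀ > 0 and every 0 ≤ β ≤ (1 - 1/M)^{-1}, the fixed-point equation σ² = N₀ + β·Ψ^PAM(σ²) has a unique positive solution. -/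
/-!
`Ψ` is continuous, nonnegative and bounded, so `v ↦ N₀ + β Ψ(v) - v` has a zero by the
intermediate value theorem, and every such zero is at least `N₀ > 0`. Uniqueness follows once
`Ψ(v₂) - Ψ(v₁) < (1 - 1/M)(v₂ - v₁)` for `0 < v₁ < v₂`, because then `v - β Ψ(v)` is strictly
increasing. The clip is 1-Lipschitz and fixes every constellation point `s`, so the squared error
`(F(s + tZ) - s)²` grows by at most `(t₂² - t₁²) Z²` as `t` grows from `t₁` to `t₂`; since
`E Z² = 1`, each point's MSE grows by at most `v₂ - v₁`. At the outer points `±α` the error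
vanishes when `Z` points inwards and is saturated once `t₁ |Z| ≥ 2α`, so together they grow by at
most `(v₂ - v₁) E min(Z², (2α/t₁)²) < v₂ - v₁`.
-/

open ProbabilityTheory MeasureTheory Set Filter
open scoped NNReal

noncomputable section

def clip (α w : ℝ) : ℝ := max (-α) (min α w)

lemma clip_neg {α : ℝ} (hα : 0 ≤ α) (w : ℝ) : clip α (-w) = -clip α w := by
  simp only [clip, max_def, min_def]; split_ifs <;> linarith

lemma abs_clip_sub_clip_le (α a b : ℝ) : |clip α a - clip α b| ≤ |a - b| := by
  unfold clip
  rw [max_comm (-α), max_comm (-α)]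
  refine (abs_max_sub_max_le_abs _ _ _).trans ((abs_min_sub_min_le_max _ _ _ _).trans ?_)
  simp

lemma abs_clip_le (α w : ℝ) : |clip α w| ≤ |α| := by
  unfold clip
  rw [abs_le]
  constructor <;> cases abs_cases α <;> simp only [max_def, min_def] <;> split_ifs <;> linarith

lemma clip_of_mem_Icc {α s : ℝ} (hs : s ∈ Icc (-α) α) : clip α s = s := by
  simp [clip, hs.1, hs.2]

lemma abs_clip_add_sub_le {α s : ℝ} (hs : s ∈ Icc (-α) α) (w : ℝ) :
    |clip α (s + w) - s| ≤ |w| := by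
  simpa [clip_of_mem_Icc hs] using abs_clip_sub_clip_le α (s + w) s

lemma sq_clip_sub_le {α s : ℝ} (hs : s ∈ Icc (-α) α) (w : ℝ) :
    (clip α w - s) ^ 2 ≤ (2 * α) ^ 2 := by
  have h₁ : -α ≤ clip α w := le_max_left _ _
  have h₂ : clip α w ≤ α := max_le (by linarith [hs.1, hs.2]) (min_le_left _ _)
  nlinarith [hs.1, hs.2]

lemma sq_clip_sub_le_sq_abs_add_abs (α s w : ℝ) : (clip α w - s) ^ 2 ≤ (|α| + |s|) ^ 2 := by
  rw [← sq_abs (clip α w - s)]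
  gcongr
  linarith [abs_sub (clip α w) s, abs_clip_le α w]

lemma sq_clip_add_mul_sub_le {α s t₁ t₂ : ℝ} (hs : s ∈ Icc (-α) α) (ht₁ : 0 ≤ t₁) (ht : t₁ ≤ t₂)
    (z : ℝ) :
    (clip α (s + t₂ * z) - s) ^ 2 - (clip α (s + t₁ * z) - s) ^ 2 ≤ (t₂ ^ 2 - t₁ ^ 2) * z ^ 2 := by
  set g₁ := clip α (s + t₁ * z) - s
  set g₂ := clip α (s + t₂ * z) - s
  have hdiff : |g₂ - g₁| ≤ (t₂ - t₁) * |z| := by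
    calc |g₂ - g₁| = |clip α (s + t₂ * z) - clip α (s + t₁ * z)| := by
          simp only [g₁, g₂, sub_sub_sub_cancel_right]
      _ ≤ |(s + t₂ * z) - (s + t₁ * z)| := abs_clip_sub_clip_le _ _ _
      _ = (t₂ - t₁) * |z| := by
        rw [show s + t₂ * z - (s + t₁ * z) = (t₂ - t₁) * z by ring, abs_mul,
          abs_of_nonneg (sub_nonneg.2 ht)]
  have hsum : |g₂ + g₁| ≤ (t₂ + t₁) * |z| := by
    calc |g₂ + g₁| ≤ |g₂| + |g₁| := abs_add_le _ _
      _ ≤ |t₂ * z| + |t₁ * z| := add_le_add (abs_clip_add_sub_le hs _) (abs_clip_add_sub_le hs _)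
      _ = (t₂ + t₁) * |z| := by
        rw [abs_mul, abs_mul, abs_of_nonneg ht₁, abs_of_nonneg (ht₁.trans ht)]; ring
  calc g₂ ^ 2 - g₁ ^ 2 = (g₂ - g₁) * (g₂ + g₁) := by ring
    _ ≤ |g₂ - g₁| * |g₂ + g₁| := by rw [← abs_mul]; exact le_abs_self _
    _ ≤ (t₂ - t₁) * |z| * ((t₂ + t₁) * |z|) :=
        mul_le_mul hdiff hsum (abs_nonneg _) (by positivity)
    _ = (t₂ ^ 2 - t₁ ^ 2) * z ^ 2 := by rw [← sq_abs z]; ring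

lemma clip_add_of_nonneg {α w : ℝ} (hα : 0 ≤ α) (hw : 0 ≤ w) : clip α (α + w) = α := by
  simp [clip, min_eq_left (le_add_of_nonneg_right hw), hα]

lemma clip_add_of_le {α w : ℝ} (hα : 0 ≤ α) (hw : w ≤ -(2 * α)) : clip α (α + w) = -α := by
  simp only [clip]
  rw [min_eq_right (by linarith), max_eq_left (by linarith)]

lemma sq_clip_top_sub_le {α t₁ t₂ : ℝ} (hα : 0 ≤ α) (ht₁ : 0 < t₁) (ht : t₁ ≤ t₂) (z : ℝ) :
    (clip α (α + t₂ * z) - α) ^ 2 - (clip α (α + t₁ * z) - α) ^ 2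
      ≤ (t₂ ^ 2 - t₁ ^ 2) * min (z ^ 2) ((2 * α / t₁) ^ 2) := by
  have hc : 0 ≤ t₂ ^ 2 - t₁ ^ 2 := by nlinarith
  have hsq := sq_clip_add_mul_sub_le (s := α) ⟨by linarith, le_rfl⟩ ht₁.le ht z
  rw [mul_min_of_nonneg _ _ hc]
  refine le_min hsq ?_
  rcases le_total 0 z with hz | hz
  · rw [clip_add_of_nonneg hα (mul_nonneg (ht₁.le.trans ht) hz),
      clip_add_of_nonneg hα (mul_nonneg ht₁.le hz), sub_self]
    positivity
  rcases le_total (t₁ * z) (-(2 * α)) with hsat | hsat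
  · have : t₂ * z ≤ t₁ * z := mul_le_mul_of_nonpos_right ht hz
    rw [clip_add_of_le hα hsat, clip_add_of_le hα (this.trans hsat), sub_self]
    positivity
  · refine hsq.trans (mul_le_mul_of_nonneg_left ?_ hc)
    rw [div_pow, le_div_iff₀ (by positivity)]
    nlinarith [mul_nonpos_of_nonneg_of_nonpos ht₁.le hz]

/-- By `clip_neg`, the error at `-α` in direction `z` is the error at `α` in direction `-z`. -/
lemma sq_clip_endpoints_sub_le {α t₁ t₂ : ℝ} (hα : 0 ≤ α) (ht₁ : 0 < t₁) (ht : t₁ ≤ t₂) (z : ℝ) :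
    ((clip α (α + t₂ * z) - α) ^ 2 - (clip α (α + t₁ * z) - α) ^ 2)
      + ((clip α (-α + t₂ * z) - -α) ^ 2 - (clip α (-α + t₁ * z) - -α) ^ 2)
      ≤ (t₂ ^ 2 - t₁ ^ 2) * min (z ^ 2) ((2 * α / t₁) ^ 2) := by
  have hbot (t : ℝ) : (clip α (-α + t * z) - -α) ^ 2 = (clip α (α + t * -z) - α) ^ 2 := by
    rw [show -α + t * z = -(α + t * -z) by ring, clip_neg hα]; ring
  rw [hbot, hbot]
  rcases le_total 0 z with hz | hz
  · rw [clip_add_of_nonneg hα (mul_nonneg (ht₁.le.trans ht) hz),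
      clip_add_of_nonneg hα (mul_nonneg ht₁.le hz), sub_self, zero_add, ← neg_sq z]
    exact sq_clip_top_sub_le hα ht₁ ht (-z)
  · rw [clip_add_of_nonneg (w := t₂ * -z) hα (mul_nonneg (ht₁.le.trans ht) (neg_nonneg.2 hz)),
      clip_add_of_nonneg (w := t₁ * -z) hα (mul_nonneg ht₁.le (neg_nonneg.2 hz)), sub_self,
      add_zero]
    exact sq_clip_top_sub_le hα ht₁ ht z

lemma integrable_sq_gaussianReal (μ : ℝ) (v : ℝ≥0) :
    Integrable (fun z : ℝ => z ^ 2) (gaussianReal μ v) :=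
  (memLp_id_gaussianReal 2).integrable_sq

lemma integral_sq_gaussianReal (v : ℝ≥0) : ∫ z, z ^ 2 ∂gaussianReal 0 v = v := by
  rw [← variance_of_integral_eq_zero aemeasurable_id' integral_id_gaussianReal,
    variance_fun_id_gaussianReal]

lemma integrable_min_sq_gaussianReal (μ : ℝ) (v : ℝ≥0) (T : ℝ) :
    Integrable (fun z : ℝ => min (z ^ 2) (T ^ 2)) (gaussianReal μ v) :=
  (integrable_sq_gaussianReal μ v).mono' (by fun_prop) (ae_of_all _ fun z => by
    rw [Real.norm_eq_abs, abs_of_nonneg (le_min (sq_nonneg z) (sq_nonneg T))]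
    exact min_le_left _ _)

lemma integral_min_sq_lt {v : ℝ≥0} (hv : v ≠ 0) (T : ℝ) :
    ∫ z, min (z ^ 2) (T ^ 2) ∂gaussianReal 0 v < v := by
  have hsq := integrable_sq_gaussianReal 0 v
  have hmin := integrable_min_sq_gaussianReal 0 v T
  have hgap : Ioi |T| ⊆ Function.support fun z : ℝ => z ^ 2 - min (z ^ 2) (T ^ 2) := by
    intro z hz
    have : T ^ 2 < z ^ 2 := sq_lt_sq.2 (hz.trans_le (le_abs_self z))
    simp [min_eq_right this.le, sub_eq_zero, this.ne']
  rw [← integral_sq_gaussianReal v, ← sub_pos, ← integral_sub hsq hmin,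
    integral_pos_iff_support_of_nonneg_ae
      (ae_of_all _ fun z => sub_nonneg.2 (min_le_left _ _)) (hsq.sub hmin)]
  refine pos_iff_ne_zero.2 fun h => ?_
  simpa using gaussianReal_absolutelyContinuous' 0 hv (measure_mono_null hgap h)

def clipMSE (α s t : ℝ) : ℝ := ∫ z, (clip α (s + t * z) - s) ^ 2 ∂gaussianReal 0 1

lemma continuous_sq_clip_sub (α s : ℝ) :
    Continuous fun p : ℝ × ℝ => (clip α (s + p.1 * p.2) - s) ^ 2 := by
  unfold clip; fun_prop

lemma integrable_sq_clip_sub (α s t : ℝ) :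
    Integrable (fun z => (clip α (s + t * z) - s) ^ 2) (gaussianReal 0 1) :=
  .of_bound ((continuous_sq_clip_sub α s).comp (Continuous.prodMk_right t)).aestronglyMeasurable
    ((|α| + |s|) ^ 2) (ae_of_all _ fun z => by
      rw [Real.norm_eq_abs, abs_sq]; exact sq_clip_sub_le_sq_abs_add_abs α s _)

lemma continuous_clipMSE (α s : ℝ) : Continuous (clipMSE α s) :=
  continuous_of_dominated
    (fun t => (integrable_sq_clip_sub α s t).aestronglyMeasurable)
    (fun t => ae_of_all _ fun z => by
      rw [Real.norm_eq_abs, abs_sq]; exact sq_clip_sub_le_sq_abs_add_abs α s _)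
    (integrable_const _)
    (ae_of_all _ fun z => (continuous_sq_clip_sub α s).comp (Continuous.prodMk_left z))

lemma clipMSE_nonneg (α s t : ℝ) : 0 ≤ clipMSE α s t :=
  integral_nonneg fun _ => sq_nonneg _

lemma clipMSE_le {α s : ℝ} (hs : s ∈ Icc (-α) α) (t : ℝ) : clipMSE α s t ≤ (2 * α) ^ 2 := by
  calc clipMSE α s t ≤ ∫ _, (2 * α) ^ 2 ∂gaussianReal 0 1 :=
        integral_mono (integrable_sq_clip_sub α s t) (integrable_const _)
          fun z => sq_clip_sub_le hs _
    _ = (2 * α) ^ 2 := by simp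

lemma clipMSE_sub_le {α s t₁ t₂ : ℝ} (hs : s ∈ Icc (-α) α) (ht₁ : 0 ≤ t₁) (ht : t₁ ≤ t₂) :
    clipMSE α s t₂ - clipMSE α s t₁ ≤ t₂ ^ 2 - t₁ ^ 2 := by
  unfold clipMSE
  rw [← integral_sub (integrable_sq_clip_sub α s t₂) (integrable_sq_clip_sub α s t₁)]
  calc _ ≤ ∫ z, (t₂ ^ 2 - t₁ ^ 2) * z ^ 2 ∂gaussianReal 0 1 :=
        integral_mono ((integrable_sq_clip_sub α s t₂).sub (integrable_sq_clip_sub α s t₁))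
          ((integrable_sq_gaussianReal 0 1).const_mul _) (sq_clip_add_mul_sub_le hs ht₁ ht)
    _ = t₂ ^ 2 - t₁ ^ 2 := by rw [integral_const_mul, integral_sq_gaussianReal]; simp

lemma clipMSE_endpoints_sub_lt {α t₁ t₂ : ℝ} (hα : 0 ≤ α) (ht₁ : 0 < t₁) (ht : t₁ < t₂) :
    (clipMSE α α t₂ - clipMSE α α t₁) + (clipMSE α (-α) t₂ - clipMSE α (-α) t₁)
      < t₂ ^ 2 - t₁ ^ 2 := by
  have hc : 0 < t₂ ^ 2 - t₁ ^ 2 := by nlinarith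
  have htop : Integrable (fun z => (clip α (α + t₂ * z) - α) ^ 2 - (clip α (α + t₁ * z) - α) ^ 2)
      (gaussianReal 0 1) := (integrable_sq_clip_sub α α t₂).sub (integrable_sq_clip_sub α α t₁)
  have hbot : Integrable
      (fun z => (clip α (-α + t₂ * z) - -α) ^ 2 - (clip α (-α + t₁ * z) - -α) ^ 2)
      (gaussianReal 0 1) :=
    (integrable_sq_clip_sub α (-α) t₂).sub (integrable_sq_clip_sub α (-α) t₁)
  unfold clipMSE
  rw [← integral_sub (integrable_sq_clip_sub α α t₂) (integrable_sq_clip_sub α α t₁),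
    ← integral_sub (integrable_sq_clip_sub α (-α) t₂) (integrable_sq_clip_sub α (-α) t₁),
    ← integral_add htop hbot]
  calc _ ≤ ∫ z, (t₂ ^ 2 - t₁ ^ 2) * min (z ^ 2) ((2 * α / t₁) ^ 2) ∂gaussianReal 0 1 :=
        integral_mono (htop.add hbot) ((integrable_min_sq_gaussianReal 0 1 _).const_mul _)
          (sq_clip_endpoints_sub_le hα ht₁ ht.le)
    _ < t₂ ^ 2 - t₁ ^ 2 := by
        rw [integral_const_mul]
        simpa using mul_lt_mul_of_pos_left (integral_min_sq_lt one_ne_zero _) hc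

/-- The constellation `{±1, ±3, …, ±(M - 1)}` is enumerated as `pamPoint M k`, `k < M`. -/
def pamPoint (M k : ℕ) : ℝ := 2 * k + 1 - M

def pamMSE (M : ℕ) (v : ℝ) : ℝ :=
  1 / M * ∑ k ∈ Finset.range M, clipMSE (M - 1) (pamPoint M k) (Real.sqrt v)

lemma pamPoint_mem_Icc {M k : ℕ} (hk : k < M) : pamPoint M k ∈ Icc (-(M - 1 : ℝ)) (M - 1) := by
  have : (k : ℝ) + 1 ≤ M := by exact_mod_cast hk
  constructor <;> unfold pamPoint <;> linarith [(k.cast_nonneg : (0 : ℝ) ≤ k)]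

lemma continuous_pamMSE (M : ℕ) : Continuous (pamMSE M) :=
  continuous_const.mul <| continuous_finsetSum _ fun _ _ =>
    (continuous_clipMSE _ _).comp Real.continuous_sqrt

lemma pamMSE_nonneg (M : ℕ) (v : ℝ) : 0 ≤ pamMSE M v :=
  mul_nonneg (by positivity) (Finset.sum_nonneg fun _ _ => clipMSE_nonneg _ _ _)

lemma pamMSE_le (M : ℕ) (v : ℝ) : pamMSE M v ≤ (2 * (M - 1)) ^ 2 := by
  rcases M.eq_zero_or_pos with rfl | hM
  · simp [pamMSE]
  have hsum : ∑ k ∈ Finset.range M, clipMSE (M - 1) (pamPoint M k) (Real.sqrt v)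
      ≤ M * (2 * (M - 1)) ^ 2 := by
    simpa using Finset.sum_le_card_nsmul _ _ _ fun k hk =>
      clipMSE_le (pamPoint_mem_Icc (Finset.mem_range.1 hk)) _
  calc pamMSE M v ≤ 1 / M * (M * (2 * (M - 1)) ^ 2) := by unfold pamMSE; gcongr
    _ = (2 * (M - 1)) ^ 2 := by field_simp

lemma pamMSE_sub_lt {M : ℕ} (hM : 2 ≤ M) {v₁ v₂ : ℝ} (hv₁ : 0 < v₁) (hv : v₁ < v₂) :
    pamMSE M v₂ - pamMSE M v₁ < (1 - 1 / M) * (v₂ - v₁) := by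
  obtain ⟨m, rfl⟩ : ∃ m, M = m + 2 := ⟨M - 2, by omega⟩
  set α : ℝ := ((m + 2 : ℕ) : ℝ) - 1
  have hα : 0 ≤ α := by simp only [α]; push_cast; linarith
  have ht₁ : 0 < Real.sqrt v₁ := Real.sqrt_pos.2 hv₁
  have ht : Real.sqrt v₁ < Real.sqrt v₂ := Real.sqrt_lt_sqrt hv₁.le hv
  have hsq : Real.sqrt v₂ ^ 2 - Real.sqrt v₁ ^ 2 = v₂ - v₁ := by
    rw [Real.sq_sqrt (by linarith), Real.sq_sqrt hv₁.le]
  set D : ℕ → ℝ := fun k =>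
    clipMSE α (pamPoint (m + 2) k) (Real.sqrt v₂) - clipMSE α (pamPoint (m + 2) k) (Real.sqrt v₁)
  have hdiff : pamMSE (m + 2) v₂ - pamMSE (m + 2) v₁
      = 1 / ((m + 2 : ℕ) : ℝ) * ∑ k ∈ Finset.range (m + 2), D k := by
    simp only [pamMSE, D, ← mul_sub, ← Finset.sum_sub_distrib]
    rfl
  have hmid : ∑ k ∈ Finset.range m, D (k + 1) ≤ m * (v₂ - v₁) := by
    simpa using Finset.sum_le_card_nsmul (Finset.range m) (fun k => D (k + 1)) (v₂ - v₁)
      fun k hk => hsq ▸ clipMSE_sub_le (pamPoint_mem_Icc (by simp at hk; omega)) ht₁.le ht.le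
  have hend : D 0 + D (m + 1) < v₂ - v₁ := by
    have h₀ : pamPoint (m + 2) 0 = -α := by simp only [pamPoint, α]; push_cast; ring
    have hlast : pamPoint (m + 2) (m + 1) = α := by simp only [pamPoint, α]; push_cast; ring
    rw [← hsq, add_comm]
    simp only [D, h₀, hlast]
    exact clipMSE_endpoints_sub_lt hα ht₁ ht
  rw [hdiff, Finset.sum_range_succ, Finset.sum_range_succ']
  push_cast
  calc 1 / ((m : ℝ) + 2) * (∑ k ∈ Finset.range m, D (k + 1) + D 0 + D (m + 1))
      < 1 / ((m : ℝ) + 2) * ((m + 1) * (v₂ - v₁)) := by gcongr; linarith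
    _ = (1 - 1 / ((m : ℝ) + 2)) * (v₂ - v₁) := by field_simp; ring

lemma existsUnique_pos_eq_add_mul {Ψ : ℝ → ℝ} {C L N₀ β : ℝ} (hΨ : Continuous Ψ)
    (hΨ₀ : ∀ v, 0 ≤ Ψ v) (hΨC : ∀ v, Ψ v ≤ C)
    (hΨL : ∀ v₁ v₂, 0 < v₁ → v₁ < v₂ → Ψ v₂ - Ψ v₁ < L * (v₂ - v₁))
    (hN₀ : 0 < N₀) (hβ₀ : 0 ≤ β) (hβL : β * L ≤ 1) :
    ∃! v, 0 < v ∧ v = N₀ + β * Ψ v := by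
  have hmono : StrictMonoOn (fun v => v - β * Ψ v) (Ioi 0) := by
    intro a ha b _ hab
    rcases hβ₀.eq_or_lt with rfl | hβ
    · simpa using hab
    · have := mul_lt_mul_of_pos_left (hΨL a b ha hab) hβ
      nlinarith
  have hB : 0 ≤ N₀ + β * C := by nlinarith [hΨ₀ 0, hΨC 0]
  obtain ⟨v, -, hv⟩ : (0 : ℝ) ∈ (fun v => N₀ + β * Ψ v - v) '' Icc 0 (N₀ + β * C) :=
    intermediate_value_Icc' hB (by fun_prop)
      ⟨by nlinarith [mul_le_mul_of_nonneg_left (hΨC (N₀ + β * C)) hβ₀],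
        by nlinarith [mul_nonneg hβ₀ (hΨ₀ 0)]⟩
  have hfix : v = N₀ + β * Ψ v := by linarith [hv]
  have hpos : 0 < v := by nlinarith [mul_nonneg hβ₀ (hΨ₀ v)]
  refine ⟨v, ⟨hpos, hfix⟩, fun w ⟨hw, hwfix⟩ => hmono.injOn hw hpos ?_⟩
  show w - β * Ψ w = v - β * Ψ v
  linarith

end

theorem stmt_12_general (M : ℕ) (hM : 2 ≤ M)
    (Ψ : ℝ → ℝ)
    (hΨ : ∀ v, Ψ v = (1 / (M : ℝ)) * ∑ k ∈ Finset.range M,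
      ∫ z, (max (-(M - 1) : ℝ) (min ((M : ℝ) - 1)
            ((2 * (k : ℝ) + 1 - M) + Real.sqrt v * z)) - (2 * (k : ℝ) + 1 - M)) ^ 2
          ∂(gaussianReal 0 1))
    (N0 β : ℝ) (hN0 : 0 < N0) (hβ0 : 0 ≤ β) (hβ : β ≤ (1 - 1 / (M : ℝ))⁻¹) :
    ∃! v : ℝ, 0 < v ∧ v = N0 + β * Ψ v := by
  obtain rfl : Ψ = pamMSE M := funext hΨ
  have hL : (0 : ℝ) < 1 - 1 / M := by
    have : (2 : ℝ) ≤ M := by exact_mod_cast hM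
    rw [sub_pos, div_lt_one (by linarith)]; linarith
  refine existsUnique_pos_eq_add_mul (continuous_pamMSE M) (pamMSE_nonneg M) (pamMSE_le M)
    (fun _ _ => pamMSE_sub_lt hM) hN0 hβ0 ?_
  calc β * (1 - 1 / (M : ℝ)) ≤ (1 - 1 / (M : ℝ))⁻¹ * (1 - 1 / M) :=
        mul_le_mul_of_nonneg_right hβ hL.le
    _ = 1 := inv_mul_cancel₀ hL.ne'

/-- Lemma 6: for M-PAM (M even, M ≥ 2) and the clipping-denoiser MSE Ψ^PAM, the
fixed-point equation σ² = N₀ + β·Ψ^PAM(σ²) has a unique positive solution for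
every N₀ > 0 and every 0 ≤ β ≤ (1-1/M)⁻¹, regardless of N₀. -/
theorem stmt_12 (M : ℕ) (hM : 2 ≤ M) (hMeven : Even M)
    (Ψ : ℝ → ℝ)
    (hΨ : ∀ v, Ψ v = (1 / (M : ℝ)) * ∑ k ∈ Finset.range M,
      ∫ z, (max (-(M - 1) : ℝ) (min ((M : ℝ) - 1)
            ((2 * (k : ℝ) + 1 - M) + Real.sqrt v * z)) - (2 * (k : ℝ) + 1 - M)) ^ 2
          ∂(gaussianReal 0 1))
    (N0 β : ℝ) (hN0 : 0 < N0) (hβ0 : 0 ≤ β) (hβ : β ≤ (1 - 1 / (M : ℝ))⁻¹) :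
    ∃! v : ℝ, 0 < v ∧ v = N0 + β * Ψ v :=
  stmt_12_general M hM Ψ hΨ N0 β hN0 hβ0 hβ
end
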